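/- arXiv:2311.03215 — 4 statements merged into one kernel-verified Lean document; each statement's English description precedes it below -/
import Mathlib

section
/- If B, A are matrices with the same number of columns and BᵀB is ε-spectrally close to AᵀA, i.e. (1−ε) BᵀB ⪯ AᵀA ⪯ (1+ε) BᵀB for 0 < ε < 1, then for every row a_i of A with a_i ⊥ ker(B), the generalized leverage score σ_i^B(A) := a_iᵀ (BᵀB)⁺ a_i satisfies (1−ε') σ_i(A) ≤ σ_i^B(A) ≤ (1+ε') σ_i(A) for ε' = ε/(1−ε), where σ_i(A) = a_iᵀ (AᵀA)⁺ a_i. -/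
open Matrix

/-!
For positive semidefinite `N` and `N u = a`, the quadratic `v ↦ 2 ⟪a, v⟫ - vᵀ N v` is maximised at
`v = u` with value `⟪a, u⟫`. For `a ⊥ ker(CᵀC) = ker C` the Penrose conditions give
`(CᵀC)(CᵀC)⁺ a = a`, so `aᵀ(CᵀC)⁺ a` is this maximum for the Gram matrix of `C`. Evaluating the
quadratic of one Gram matrix at the maximiser of the other and comparing the two quadratic forms
through the spectral bounds yields `(1 - ε) σ^B ≤ σ` and `(1 - 2ε) σ ≤ (1 - ε) σ^B`.
-/

/-- The four Penrose conditions characterizing the Moore–Penrose pseudoinverse. -/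
def IsMoorePenrose {m n : Type*} [Fintype m] [Fintype n] (A : Matrix m n ℝ)
    (P : Matrix n m ℝ) : Prop :=
  A * P * A = A ∧ P * A * P = P ∧ (A * P)ᵀ = A * P ∧ (P * A)ᵀ = P * A

theorem Matrix.posSemidef_transpose_mul_self {ι κ : Type*} [Finite ι] [Fintype κ]
    (C : Matrix κ ι ℝ) : (Cᵀ * C).PosSemidef := by
  simpa only [conjTranspose_eq_transpose_of_trivial] using posSemidef_conjTranspose_mul_self C

namespace IsMoorePenrose

variable {ι κ : Type*} [Fintype ι] [Fintype κ] {N P : Matrix ι ι ℝ}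

theorem self_mul_self_mul_eq (hN : N.IsSymm) (hP : IsMoorePenrose N P) : N * N * P = N :=
  calc N * N * P = N * (N * P)ᵀ := by rw [Matrix.mul_assoc, hP.2.2.1]
    _ = (N * P * N)ᵀ := by simp only [transpose_mul, hN.eq]
    _ = N := by rw [hP.1, hN.eq]

theorem mulVec_mulVec_eq_self (hN : N.IsSymm) (hP : IsMoorePenrose N P) {a : ι → ℝ}
    (ha : ∀ v, N *ᵥ v = 0 → a ⬝ᵥ v = 0) : N *ᵥ (P *ᵥ a) = a := by
  set r := a - N *ᵥ (P *ᵥ a) with hr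
  have hNr : N *ᵥ r = 0 := by
    rw [hr, mulVec_sub, mulVec_mulVec, mulVec_mulVec, hP.self_mul_self_mul_eq hN, sub_self]
  have har : a ⬝ᵥ r = 0 := ha r hNr
  have hNPar : (N *ᵥ (P *ᵥ a)) ⬝ᵥ r = 0 := by
    rw [dotProduct_comm, dotProduct_mulVec, ← mulVec_transpose, hN.eq, hNr, zero_dotProduct]
  have hrr : r ⬝ᵥ r = 0 := by
    rw [hr, sub_dotProduct, ← hr, har, hNPar, sub_zero]
  exact (sub_eq_zero.mp (dotProduct_self_eq_zero.mp hrr)).symm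

theorem gram_mulVec_mulVec_eq_self {C : Matrix κ ι ℝ} (hP : IsMoorePenrose (Cᵀ * C) P)
    {a : ι → ℝ} (ha : ∀ v, C *ᵥ v = 0 → a ⬝ᵥ v = 0) : (Cᵀ * C) *ᵥ (P *ᵥ a) = a := by
  have hsymm := isHermitian_iff_isSymm.mp (posSemidef_transpose_mul_self C).isHermitian
  refine hP.mulVec_mulVec_eq_self hsymm fun v hv => ha v ?_
  exact (conjTranspose_mul_self_mulVec_eq_zero C v).mp
    (by rwa [conjTranspose_eq_transpose_of_trivial])

end IsMoorePenrose

namespace Matrix.PosSemidef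

variable {ι : Type*} [Fintype ι] {M N : Matrix ι ι ℝ} {a u : ι → ℝ}

theorem two_mul_dotProduct_sub_le (hN : N.PosSemidef) (hu : N *ᵥ u = a) (v : ι → ℝ) :
    2 * (a ⬝ᵥ v) - v ⬝ᵥ (N *ᵥ v) ≤ a ⬝ᵥ u := by
  have hdual : ∀ w, u ⬝ᵥ (N *ᵥ w) = a ⬝ᵥ w := fun w => by
    rw [dotProduct_mulVec, ← mulVec_transpose, (isHermitian_iff_isSymm.mp hN.isHermitian).eq, hu,
      dotProduct_comm]
  have hnonneg : 0 ≤ (v - u) ⬝ᵥ (N *ᵥ (v - u)) := by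
    simpa only [star_trivial] using hN.dotProduct_mulVec_nonneg (v - u)
  have hexpand : (v - u) ⬝ᵥ (N *ᵥ (v - u)) = v ⬝ᵥ (N *ᵥ v) - 2 * (a ⬝ᵥ v) + a ⬝ᵥ u := by
    rw [mulVec_sub, sub_dotProduct, dotProduct_sub, dotProduct_sub, hu, hdual, dotProduct_comm v a,
      dotProduct_comm u a]
    ring
  linarith

theorem two_mul_sub_mul_dotProduct_le (hM : M.PosSemidef) {c c' : ℝ} (hc : 0 ≤ c)
    (hMN : (c' • N - c • M).PosSemidef) {w : ι → ℝ} (hu : M *ᵥ u = a) (hw : N *ᵥ w = a) :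
    (2 * c - c') * (a ⬝ᵥ w) ≤ c * (a ⬝ᵥ u) := by
  have hquad : c * (w ⬝ᵥ (M *ᵥ w)) ≤ c' * (a ⬝ᵥ w) := by
    have h := hMN.dotProduct_mulVec_nonneg w
    simp only [star_trivial, sub_mulVec, smul_mulVec, dotProduct_sub, dotProduct_smul,
      smul_eq_mul, hw, dotProduct_comm w a] at h
    linarith
  have hvar := mul_le_mul_of_nonneg_left (hM.two_mul_dotProduct_sub_le hu w) hc
  linarith

end Matrix.PosSemidef

theorem generalized_leverage_score_approx_general {n m d : ℕ}
    (A : Matrix (Fin n) (Fin d) ℝ) (B : Matrix (Fin m) (Fin d) ℝ)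
    (ε : ℝ) (hε1 : ε < 1)
    (hlow : (Aᵀ * A - (1 - ε) • (Bᵀ * B)).PosSemidef)
    (hupp : ((1 + ε) • (Bᵀ * B) - Aᵀ * A).PosSemidef)
    (PB PA : Matrix (Fin d) (Fin d) ℝ)
    (hPB : IsMoorePenrose (Bᵀ * B) PB) (hPA : IsMoorePenrose (Aᵀ * A) PA)
    (i : Fin n) (hker : ∀ v : Fin d → ℝ, B *ᵥ v = 0 → A i ⬝ᵥ v = 0) :
    (1 - ε / (1 - ε)) * (A i ⬝ᵥ (PA *ᵥ A i)) ≤ A i ⬝ᵥ (PB *ᵥ A i) ∧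
    A i ⬝ᵥ (PB *ᵥ A i) ≤ (1 + ε / (1 - ε)) * (A i ⬝ᵥ (PA *ᵥ A i)) := by
  have hε : 0 < 1 - ε := by linarith
  have hA := hPA.gram_mulVec_mulVec_eq_self (a := A i) fun v hv => congrFun hv i
  have hB := hPB.gram_mulVec_mulVec_eq_self hker
  have lower := (posSemidef_transpose_mul_self B).two_mul_sub_mul_dotProduct_le
    (c := 1 - ε) (c' := 1) hε.le (by rwa [one_smul]) hB hA
  have upper := (posSemidef_transpose_mul_self A).two_mul_sub_mul_dotProduct_le
    (c := 1) (c' := 1 + ε) zero_le_one (by rwa [one_smul]) hA hB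
  constructor
  · rw [show 1 - ε / (1 - ε) = (2 * (1 - ε) - 1) / (1 - ε) by field_simp; ring,
      div_mul_eq_mul_div, div_le_iff₀ hε]
    linarith
  · rw [show 1 + ε / (1 - ε) = 1 / (1 - ε) by field_simp; ring, one_div_mul_eq_div,
      le_div_iff₀ hε]
    linarith

/-- If (1−ε)BᵀB ⪯ AᵀA ⪯ (1+ε)BᵀB, then for every row a_i of A orthogonal to ker(B),
the generalized leverage score σ_i^B(A) = a_iᵀ(BᵀB)⁺a_i is a (1±ε') multiplicative
approximation of σ_i(A) = a_iᵀ(AᵀA)⁺a_i, with ε' = ε/(1−ε). -/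
theorem generalized_leverage_score_approx {n m d : ℕ}
    (A : Matrix (Fin n) (Fin d) ℝ) (B : Matrix (Fin m) (Fin d) ℝ)
    (ε : ℝ) (hε0 : 0 < ε) (hε1 : ε < 1)
    (hlow : (Aᵀ * A - (1 - ε) • (Bᵀ * B)).PosSemidef)
    (hupp : ((1 + ε) • (Bᵀ * B) - Aᵀ * A).PosSemidef)
    (PB PA : Matrix (Fin d) (Fin d) ℝ)
    (hPB : IsMoorePenrose (Bᵀ * B) PB) (hPA : IsMoorePenrose (Aᵀ * A) PA)
    (i : Fin n) (hker : ∀ v : Fin d → ℝ, B *ᵥ v = 0 → A i ⬝ᵥ v = 0) :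
    (1 - ε / (1 - ε)) * (A i ⬝ᵥ (PA *ᵥ A i)) ≤ A i ⬝ᵥ (PB *ᵥ A i) ∧
    A i ⬝ᵥ (PB *ᵥ A i) ≤ (1 + ε / (1 - ε)) * (A i ⬝ᵥ (PA *ᵥ A i)) :=
  generalized_leverage_score_approx_general A B ε hε1 hlow hupp PB PA hPB hPA i hker
end

section
/- Let B ∈ ℝ^{n×d}, let D ∈ ℝ^{n×n} be diagonal with every diagonal entry D_{ii} ∈ [1−ε, 1+ε], and let v ∈ ℝ^n. Then ‖Bᵀv − BᵀDv‖_{(BᵀB)^{-1}} ≤ ε ‖v‖₂, where ‖u‖_M := √(uᵀMu) and BᵀB is assumed invertible. -/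
/-!
With `x := (BᵀB)⁻¹ Bᵀu`, the vector `Bx` is the orthogonal projection of `u` onto the column
space of `B`, and `(Bᵀu)ᵀ (BᵀB)⁻¹ (Bᵀu) = ‖Bx‖² ≤ ‖u‖²`. Applied to
`u = v − Dv = diag(1 − w) v`, whose coordinates are at most `ε` times those of `v` in absolute
value, this gives the bound.
-/

open Matrix

namespace Matrix

variable {m k : Type*} [Fintype m] [Fintype k]

theorem transpose_mulVec_dotProduct (B : Matrix m k ℝ) (y : m → ℝ) (x : k → ℝ) :
    (Bᵀ *ᵥ y) ⬝ᵥ x = y ⬝ᵥ (B *ᵥ x) := by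
  rw [mulVec_transpose, dotProduct_mulVec]

theorem dotProduct_inv_gram_mulVec_le [DecidableEq k] (B : Matrix m k ℝ)
    (hB : IsUnit (Bᵀ * B).det) (u : m → ℝ) :
    (Bᵀ *ᵥ u) ⬝ᵥ ((Bᵀ * B)⁻¹ *ᵥ (Bᵀ *ᵥ u)) ≤ u ⬝ᵥ u := by
  set x := (Bᵀ * B)⁻¹ *ᵥ (Bᵀ *ᵥ u)
  have normal_eq : Bᵀ *ᵥ (B *ᵥ x) = Bᵀ *ᵥ u := by
    rw [mulVec_mulVec, mulVec_mulVec, mul_nonsing_inv _ hB, one_mulVec]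
  have proj_sq : (B *ᵥ x) ⬝ᵥ (B *ᵥ x) = u ⬝ᵥ (B *ᵥ x) := by
    rw [← transpose_mulVec_dotProduct, normal_eq, transpose_mulVec_dotProduct]
  have residual_nonneg : 0 ≤ (u - B *ᵥ x) ⬝ᵥ (u - B *ᵥ x) := by
    simpa using dotProduct_self_star_nonneg (u - B *ᵥ x)
  rw [sub_dotProduct, dotProduct_sub, dotProduct_sub, proj_sq, dotProduct_comm (B *ᵥ x) u]
    at residual_nonneg
  rw [transpose_mulVec_dotProduct]
  linarith

theorem diagonal_mulVec_dotProduct_self_le [DecidableEq m] {c : m → ℝ} {ε : ℝ}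
    (hc : ∀ i, |c i| ≤ ε) (v : m → ℝ) :
    (diagonal c *ᵥ v) ⬝ᵥ (diagonal c *ᵥ v) ≤ ε ^ 2 * (v ⬝ᵥ v) := by
  simp only [dotProduct, mulVec_diagonal, Finset.mul_sum]
  refine Finset.sum_le_sum fun i _ => ?_
  have hci : c i ^ 2 ≤ ε ^ 2 := sq_le_sq' (abs_le.mp (hc i)).1 (abs_le.mp (hc i)).2
  nlinarith [mul_self_nonneg (v i)]

end Matrix

/-- If D = diag(w) with w_i ∈ [1−ε, 1+ε] and BᵀB is positive definite, then
‖Bᵀv − BᵀDv‖_{(BᵀB)⁻¹} ≤ ε ‖v‖₂. -/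
theorem multiplicative_reweighting_error {n d : ℕ}
    (B : Matrix (Fin n) (Fin d) ℝ) (w : Fin n → ℝ) (v : Fin n → ℝ)
    (ε : ℝ) (hε : 0 ≤ ε)
    (hw : ∀ i, w i ∈ Set.Icc (1 - ε) (1 + ε))
    (hB : (Bᵀ * B).PosDef) :
    Real.sqrt ((Bᵀ *ᵥ v - Bᵀ *ᵥ (Matrix.diagonal w *ᵥ v)) ⬝ᵥ
        ((Bᵀ * B)⁻¹ *ᵥ (Bᵀ *ᵥ v - Bᵀ *ᵥ (Matrix.diagonal w *ᵥ v)))) ≤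
      ε * Real.sqrt (v ⬝ᵥ v) := by
  have residual : v - diagonal w *ᵥ v = diagonal (1 - w) *ᵥ v := by
    funext i
    simp only [Pi.sub_apply, Pi.one_apply, mulVec_diagonal]
    ring
  have weight_bound : ∀ i, |(1 - w) i| ≤ ε := fun i => by
    rw [Pi.sub_apply, Pi.one_apply, abs_le]
    constructor <;> linarith [(hw i).1, (hw i).2]
  rw [← mulVec_sub, residual]
  calc _ ≤ Real.sqrt (ε ^ 2 * (v ⬝ᵥ v)) :=
        Real.sqrt_le_sqrt <| (dotProduct_inv_gram_mulVec_le B hB.det_pos.ne'.isUnit _).trans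
          (diagonal_mulVec_dotProduct_self_le weight_bound v)
    _ = ε * Real.sqrt (v ⬝ᵥ v) := by rw [Real.sqrt_mul (sq_nonneg ε), Real.sqrt_sq hε]
end

section
/- Covariance trace bound for the matrix-vector sampling estimator: let B ∈ ℝ^{n×d}, v ∈ ℝ^n, and let W̃ be positive definite with W̃ ⪯ BᵀB ⪯ (1+γ)·W̃ for γ ≥ 0. Define the random vector X = −n v_ℓ W̃^{-1/2} Bᵀ e_ℓ with ℓ uniform on [n]. Then E[X] = −W̃^{-1/2} Bᵀ v, and each coordinate variance satisfies E[X_i²] ≤ (1+γ) n ‖v‖_∞², hence Tr(Cov(X)) ≤ (1+γ) n d ‖v‖_∞². -/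
/-!
With `M = W̃^{-1/2}` and `A = M Bᵀ`, the sample `X_ℓ` is `-n v_ℓ` times the `ℓ`-th column of `A`,
so its mean is `-A v`. Conjugating `BᵀB ⪯ (1+γ) W̃` by `M` gives `A Aᵀ ⪯ (1+γ) I`, so every row
of `A` has squared norm at most `1+γ`. Hence the second moment of coordinate `i`,
`n ∑_ℓ v_ℓ² A_{iℓ}²`, is at most `(1+γ) n ‖v‖_∞²`, and each variance is at most its second moment.
-/

open Matrix
open scoped MatrixOrder

namespace Matrix

variable {m k : Type*}

lemma diag_le_diag_of_le [Fintype m] [DecidableEq m] {P Q : Matrix m m ℝ} (h : P ≤ Q) (i : m) :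
    P i i ≤ Q i i :=
  sub_nonneg.mp (le_iff.mp h).diag_nonneg

variable [Fintype k]

lemma mul_transpose_self_apply_self (A : Matrix m k ℝ) (i : m) :
    (A * Aᵀ) i i = ∑ ℓ, A i ℓ ^ 2 := by
  simp only [mul_apply, transpose_apply, sq]

lemma sum_smul_mulVec_single [DecidableEq k] (A : Matrix m k ℝ) (v : k → ℝ) :
    ∑ ℓ, v ℓ • (A *ᵥ Pi.single ℓ 1) = A *ᵥ v := by
  ext i
  simp [mulVec, dotProduct, mul_comm]

variable [DecidableEq k]

lemma isSelfAdjoint_inv_sqrt (W : Matrix k k ℝ) : IsSelfAdjoint (CFC.sqrt W)⁻¹ := by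
  have hS := IsSelfAdjoint.of_nonneg (CFC.sqrt_nonneg W)
  rw [IsSelfAdjoint, star_eq_conjTranspose, conjTranspose_nonsing_inv, ← star_eq_conjTranspose,
    hS.star_eq]

lemma inv_sqrt_mul_mul_inv_sqrt {W : Matrix k k ℝ} (hW : W.PosDef) :
    (CFC.sqrt W)⁻¹ * W * (CFC.sqrt W)⁻¹ = 1 := by
  have hS : IsUnit (CFC.sqrt W).det := (isUnit_iff_isUnit_det _).mp <|
    CFC.isUnit_sqrt_iff_isStrictlyPositive.mpr hW.isStrictlyPositive
  nth_rw 2 [← CFC.sqrt_mul_sqrt_self W hW.posSemidef.nonneg]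
  rw [← mul_assoc, nonsing_inv_mul _ hS, one_mul, mul_nonsing_inv _ hS]

lemma inv_sqrt_mul_mul_inv_sqrt_le_smul_one {W P : Matrix k k ℝ} {c : ℝ} (hW : W.PosDef)
    (hP : P ≤ c • W) : (CFC.sqrt W)⁻¹ * P * (CFC.sqrt W)⁻¹ ≤ c • 1 := by
  have := star_left_conjugate_le_conjugate hP (CFC.sqrt W)⁻¹
  rwa [(isSelfAdjoint_inv_sqrt W).star_eq, mul_smul_comm, smul_mul_assoc,
    inv_sqrt_mul_mul_inv_sqrt hW] at this

lemma sum_sq_inv_sqrt_mul_transpose_le [Fintype m] {W : Matrix k k ℝ} {B : Matrix m k ℝ} {c : ℝ}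
    (hW : W.PosDef) (hB : Bᵀ * B ≤ c • W) (i : k) :
    ∑ ℓ, ((CFC.sqrt W)⁻¹ * Bᵀ) i ℓ ^ 2 ≤ c := by
  have hM : ((CFC.sqrt W)⁻¹)ᵀ = (CFC.sqrt W)⁻¹ := isSelfAdjoint_inv_sqrt W
  have hAAt : (CFC.sqrt W)⁻¹ * Bᵀ * ((CFC.sqrt W)⁻¹ * Bᵀ)ᵀ
      = (CFC.sqrt W)⁻¹ * (Bᵀ * B) * (CFC.sqrt W)⁻¹ := by
    rw [transpose_mul, hM, transpose_transpose]
    simp only [Matrix.mul_assoc]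
  have := diag_le_diag_of_le (inv_sqrt_mul_mul_inv_sqrt_le_smul_one hW hB) i
  rwa [← hAAt, mul_transpose_self_apply_self, smul_apply, one_apply_eq, smul_eq_mul,
    mul_one] at this

end Matrix

lemma sum_mul_sq_le_sq_mul_sum_sq {ι : Type*} [Fintype ι] {v a : ι → ℝ} {α : ℝ}
    (hα : ∀ ℓ, |v ℓ| ≤ α) : ∑ ℓ, (v ℓ * a ℓ) ^ 2 ≤ α ^ 2 * ∑ ℓ, a ℓ ^ 2 := by
  rw [Finset.mul_sum]
  refine Finset.sum_le_sum fun ℓ _ => ?_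
  rw [mul_pow, ← sq_abs (v ℓ)]
  gcongr
  exact hα ℓ

section SamplingEstimator

variable {m : Type*} {n : ℕ}

/-- The estimator as a function of the index `ℓ`, which is drawn uniformly from `Fin n`, so
expectations are the averages `n⁻¹ ∑ ℓ`. -/
def samplingEstimator (A : Matrix m (Fin n) ℝ) (v : Fin n → ℝ) (ℓ : Fin n) : m → ℝ :=
  (-(n : ℝ) * v ℓ) • (A *ᵥ Pi.single ℓ 1)

lemma samplingEstimator_apply (A : Matrix m (Fin n) ℝ) (v : Fin n → ℝ) (ℓ : Fin n) (i : m) :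
    samplingEstimator A v ℓ i = -(n : ℝ) * (v ℓ * A i ℓ) := by
  simp [samplingEstimator, mul_assoc]

lemma inv_smul_sum_samplingEstimator (A : Matrix m (Fin n) ℝ) (v : Fin n → ℝ) :
    (n : ℝ)⁻¹ • ∑ ℓ, samplingEstimator A v ℓ = -(A *ᵥ v) := by
  have hterm : ∀ ℓ, (n : ℝ)⁻¹ • samplingEstimator A v ℓ = -(v ℓ • (A *ᵥ Pi.single ℓ 1)) := by
    intro ℓ
    have hn : (n : ℝ) ≠ 0 := by exact_mod_cast ℓ.pos.ne'
    rw [samplingEstimator, smul_smul, neg_mul, mul_neg, ← mul_assoc, inv_mul_cancel₀ hn,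
      one_mul, neg_smul]
  rw [Finset.smul_sum, Finset.sum_congr rfl fun ℓ _ => hterm ℓ, Finset.sum_neg_distrib,
    sum_smul_mulVec_single]

lemma inv_mul_sum_samplingEstimator_sq_le (A : Matrix m (Fin n) ℝ) (v : Fin n → ℝ) {α c : ℝ}
    (hα : ∀ ℓ, |v ℓ| ≤ α) (i : m) (hA : ∑ ℓ, A i ℓ ^ 2 ≤ c) :
    (n : ℝ)⁻¹ * ∑ ℓ, samplingEstimator A v ℓ i ^ 2 ≤ c * n * α ^ 2 := by
  calc (n : ℝ)⁻¹ * ∑ ℓ, samplingEstimator A v ℓ i ^ 2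
      = n * ∑ ℓ, (v ℓ * A i ℓ) ^ 2 := by
        simp_rw [samplingEstimator_apply, mul_pow, neg_sq, ← Finset.mul_sum, sq (n : ℝ),
          ← mul_assoc, inv_mul_mul_self]
    _ ≤ n * (α ^ 2 * c) := by
        gcongr
        exact (sum_mul_sq_le_sq_mul_sum_sq hα).trans (by gcongr)
    _ = c * n * α ^ 2 := by ring

end SamplingEstimator

theorem sampling_estimator_mean_and_cov_trace_general {n d : ℕ}
    (B : Matrix (Fin n) (Fin d) ℝ) (v : Fin n → ℝ)
    (Wt : Matrix (Fin d) (Fin d) ℝ) (γ α : ℝ)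
    (hWt : Wt.PosDef)
    (h2 : ((1 + γ) • Wt - Bᵀ * B).PosSemidef)
    (hα : ∀ ℓ, |v ℓ| ≤ α)
    (X : Fin n → Fin d → ℝ)
    (hX : ∀ ℓ, X ℓ =
      (-(n : ℝ) * v ℓ) • ((CFC.sqrt Wt)⁻¹ *ᵥ (Bᵀ *ᵥ Pi.single ℓ 1))) :
    ((n : ℝ)⁻¹ • ∑ ℓ, X ℓ) = -((CFC.sqrt Wt)⁻¹ *ᵥ (Bᵀ *ᵥ v)) ∧
    (∀ i, (n : ℝ)⁻¹ * ∑ ℓ, (X ℓ i) ^ 2 ≤ (1 + γ) * n * α ^ 2) ∧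
    (∑ i : Fin d, ((n : ℝ)⁻¹ * ∑ ℓ, (X ℓ i) ^ 2 - ((n : ℝ)⁻¹ * ∑ ℓ, X ℓ i) ^ 2))
      ≤ (1 + γ) * n * d * α ^ 2 := by
  set A := (CFC.sqrt Wt)⁻¹ * Bᵀ
  obtain rfl : X = samplingEstimator A v :=
    funext fun ℓ => by rw [hX ℓ, samplingEstimator, mulVec_mulVec]
  have hsecond : ∀ i, (n : ℝ)⁻¹ * ∑ ℓ, samplingEstimator A v ℓ i ^ 2 ≤ (1 + γ) * n * α ^ 2 :=
    fun i => inv_mul_sum_samplingEstimator_sq_le A v hα i <|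
      Matrix.sum_sq_inv_sqrt_mul_transpose_le hWt (le_iff.mpr h2) i
  refine ⟨by rw [inv_smul_sum_samplingEstimator, mulVec_mulVec], hsecond, ?_⟩
  calc _ ≤ ∑ _i : Fin d, (1 + γ) * n * α ^ 2 :=
        Finset.sum_le_sum fun i _ => (sub_le_self _ (sq_nonneg _)).trans (hsecond i)
    _ = (1 + γ) * n * d * α ^ 2 := by
        rw [Finset.sum_const, Finset.card_univ, Fintype.card_fin, nsmul_eq_mul]
        ring

/-- Covariance trace bound for the matrix-vector sampling estimator:
with X(ℓ) = −n v_ℓ W̃^{-1/2} Bᵀ e_ℓ and ℓ uniform on [n], the mean is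
−W̃^{-1/2} Bᵀ v, each coordinate second moment is at most (1+γ) n ‖v‖_∞², and
the trace of the covariance matrix is at most (1+γ) n d ‖v‖_∞². -/
theorem sampling_estimator_mean_and_cov_trace {n d : ℕ} (hn : 0 < n)
    (B : Matrix (Fin n) (Fin d) ℝ) (v : Fin n → ℝ)
    (Wt : Matrix (Fin d) (Fin d) ℝ) (γ α : ℝ) (hγ : 0 ≤ γ)
    (hWt : Wt.PosDef)
    (h1 : (Bᵀ * B - Wt).PosSemidef) (h2 : ((1 + γ) • Wt - Bᵀ * B).PosSemidef)
    (hα : ∀ ℓ, |v ℓ| ≤ α)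
    (X : Fin n → Fin d → ℝ)
    (hX : ∀ ℓ, X ℓ =
      (-(n : ℝ) * v ℓ) • ((CFC.sqrt Wt)⁻¹ *ᵥ (Bᵀ *ᵥ Pi.single ℓ 1))) :
    ((n : ℝ)⁻¹ • ∑ ℓ, X ℓ) = -((CFC.sqrt Wt)⁻¹ *ᵥ (Bᵀ *ᵥ v)) ∧
    (∀ i, (n : ℝ)⁻¹ * ∑ ℓ, (X ℓ i) ^ 2 ≤ (1 + γ) * n * α ^ 2) ∧
    (∑ i : Fin d, ((n : ℝ)⁻¹ * ∑ ℓ, (X ℓ i) ^ 2 - ((n : ℝ)⁻¹ * ∑ ℓ, X ℓ i) ^ 2))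
      ≤ (1 + γ) * n * d * α ^ 2 :=
  sampling_estimator_mean_and_cov_trace_general B v Wt γ α hWt h2 hα X hX
end

section
/- Suboptimality along the central path: let f be a self-concordant barrier for convex domain D with complexity ϑ_f = sup_x ‖H(x)^{-1}g(x)‖²_{H(x)}, let f_η(x) = η cᵀx + f(x) and let z(η) minimize f_η. Then for any y ∈ D with ‖y − z(η)‖_{z(η)} < 1, we have cᵀy ≤ min_{x∈D} cᵀx + (ϑ_f/η)(1 + ‖y − z(η)‖_{z(η)}); in particular cᵀy ≤ val + 2ϑ_f/η when ‖y−z(η)‖_{z(η)} ≤ 1. -/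
/-!
At the minimiser z of η cᵀx + f(x) we have η c = -g(z), so
η (cᵀy - cᵀx) = g(z)ᵀ(x - z) + g(z)ᵀ(z - y). The first term is at most ϑ for every x ∈ D: along
the segment from z to x, ψ(t) = g(z + t(x - z))ᵀ(x - z) satisfies the Riccati inequality
ψ² ≤ ϑ ψ' (Cauchy–Schwarz in the local norm), which forbids ψ(0) > ϑ on an interval of length 1.
The second term is at most ϑ ‖y - z‖_z, by applying the first bound to the points z + (z - y)/s,
which lie in the Dikin ellipsoid of z, hence in D, for every s > ‖y - z‖_z.
-/

open Matrix

/-- The local norm ‖v‖_H = √(vᵀ H v). -/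
noncomputable def localNorm {d : ℕ} (H : Matrix (Fin d) (Fin d) ℝ)
    (v : Fin d → ℝ) : ℝ :=
  Real.sqrt (v ⬝ᵥ (H *ᵥ v))

/-- (Strongly nondegenerate) self-concordance of a function with Hessian field H on
the domain D (Renegar's definition): for every x ∈ D, the open unit ball in the
local norm at x is contained in D, and for every y in that ball and every v ≠ 0,
1 − ‖y−x‖_x ≤ ‖v‖_y/‖v‖_x ≤ 1/(1 − ‖y−x‖_x). -/
def SelfConcordantOn {d : ℕ} (D : Set (Fin d → ℝ))
    (H : (Fin d → ℝ) → Matrix (Fin d) (Fin d) ℝ) : Prop :=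
  ∀ x ∈ D,
    (∀ y, localNorm (H x) (y - x) < 1 → y ∈ D) ∧
    ∀ y, localNorm (H x) (y - x) < 1 → ∀ v : Fin d → ℝ, v ≠ 0 →
      (1 - localNorm (H x) (y - x)) * localNorm (H x) v ≤ localNorm (H y) v ∧
      (1 - localNorm (H x) (y - x)) * localNorm (H y) v ≤ localNorm (H x) v

/-- g is the gradient of f and H the Hessian (derivative of g) at every point of D. -/
def IsGradHessOn {d : ℕ} (D : Set (Fin d → ℝ)) (f : (Fin d → ℝ) → ℝ)
    (g : (Fin d → ℝ) → (Fin d → ℝ))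
    (H : (Fin d → ℝ) → Matrix (Fin d) (Fin d) ℝ) : Prop :=
  ∀ x ∈ D,
    (∃ L : (Fin d → ℝ) →L[ℝ] ℝ, HasFDerivAt f L x ∧ ∀ v, L v = g x ⬝ᵥ v) ∧
    (∃ L' : (Fin d → ℝ) →L[ℝ] (Fin d → ℝ), HasFDerivAt g L' x ∧ ∀ v, L' v = H x *ᵥ v)

open Set Filter Topology

section CauchySchwarz

variable {n : Type*} [Fintype n]

theorem Matrix.IsHermitian.dotProduct_mulVec_comm {M : Matrix n n ℝ} (hM : M.IsHermitian)
    (u v : n → ℝ) : u ⬝ᵥ M *ᵥ v = v ⬝ᵥ M *ᵥ u := by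
  rw [← dotProduct_transpose_mulVec, ← conjTranspose_eq_transpose_of_trivial, hM.eq]

theorem Matrix.PosSemidef.sq_dotProduct_mulVec_le {M : Matrix n n ℝ} (hM : M.PosSemidef)
    (u w : n → ℝ) : (w ⬝ᵥ M *ᵥ u) ^ 2 ≤ (w ⬝ᵥ M *ᵥ w) * (u ⬝ᵥ M *ᵥ u) := by
  have hquad : ∀ t : ℝ,
      0 ≤ (w ⬝ᵥ M *ᵥ w) * (t * t) + (2 * (w ⬝ᵥ M *ᵥ u)) * t + u ⬝ᵥ M *ᵥ u := by
    intro t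
    have h := hM.dotProduct_mulVec_nonneg (u + t • w)
    simp only [star_trivial, mulVec_add, mulVec_smul, dotProduct_add, add_dotProduct,
      dotProduct_smul, smul_dotProduct, smul_eq_mul, hM.1.dotProduct_mulVec_comm u w] at h
    linarith
  have := discrim_le_zero hquad
  rw [discrim] at this
  linarith

theorem Matrix.PosDef.sq_dotProduct_le [DecidableEq n] {M : Matrix n n ℝ} (hM : M.PosDef)
    (a u : n → ℝ) : (a ⬝ᵥ u) ^ 2 ≤ (a ⬝ᵥ M⁻¹ *ᵥ a) * (u ⬝ᵥ M *ᵥ u) := by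
  set w := M⁻¹ *ᵥ a
  have hMw : M *ᵥ w = a := by
    rw [mulVec_mulVec, mul_nonsing_inv _ (isUnit_iff_ne_zero.mpr hM.det_pos.ne'), one_mulVec]
  have h := hM.posSemidef.sq_dotProduct_mulVec_le u w
  rwa [hM.1.dotProduct_mulVec_comm w u, hMw, dotProduct_comm u a, dotProduct_comm w a] at h

end CauchySchwarz

section LocalNorm

variable {d : ℕ}

theorem localNorm_nonneg (M : Matrix (Fin d) (Fin d) ℝ) (v : Fin d → ℝ) : 0 ≤ localNorm M v :=
  Real.sqrt_nonneg _

theorem localNorm_smul (M : Matrix (Fin d) (Fin d) ℝ) (t : ℝ) (v : Fin d → ℝ) :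
    localNorm M (t • v) = |t| * localNorm M v := by
  rw [localNorm, localNorm, mulVec_smul, dotProduct_smul, smul_dotProduct, smul_eq_mul,
    smul_eq_mul, ← mul_assoc, ← sq, Real.sqrt_mul (sq_nonneg t), Real.sqrt_sq_eq_abs]

theorem localNorm_neg (M : Matrix (Fin d) (Fin d) ℝ) (v : Fin d → ℝ) :
    localNorm M (-v) = localNorm M v := by
  simpa using localNorm_smul M (-1) v

end LocalNorm

/-- The Riccati inequality ψ² ≤ ϑ ψ' makes 1/ψ + t/ϑ nonincreasing while ψ > 0, so 1/ψ could not
stay positive on [0, 1] if 1/ψ(0) < 1/ϑ. -/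
theorem le_of_sq_le_mul_deriv {ψ ψ' : ℝ → ℝ} {ϑ : ℝ} (hϑ : 0 ≤ ϑ)
    (hψ : ∀ t ∈ Icc (0 : ℝ) 1, HasDerivAt ψ (ψ' t) t)
    (hsq : ∀ t ∈ Icc (0 : ℝ) 1, ψ t ^ 2 ≤ ϑ * ψ' t) : ψ 0 ≤ ϑ := by
  by_contra! h0
  have h0mem : (0 : ℝ) ∈ Icc (0 : ℝ) 1 := ⟨le_rfl, zero_le_one⟩
  have h1mem : (1 : ℝ) ∈ Icc (0 : ℝ) 1 := ⟨zero_le_one, le_rfl⟩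
  rcases hϑ.eq_or_lt with rfl | hϑpos
  · nlinarith [hsq 0 h0mem]
  have hderiv_nonneg : ∀ t ∈ Icc (0 : ℝ) 1, 0 ≤ ψ' t := fun t ht =>
    nonneg_of_mul_nonneg_right ((sq_nonneg _).trans (hsq t ht)) hϑpos
  have hmono : MonotoneOn ψ (Icc 0 1) :=
    monotoneOn_of_hasDerivWithinAt_nonneg (convex_Icc 0 1)
      (fun t ht => (hψ t ht).continuousAt.continuousWithinAt)
      (fun t ht => (hψ t (interior_subset ht)).hasDerivWithinAt)
      (fun t ht => hderiv_nonneg t (interior_subset ht))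
  have hψpos : ∀ t ∈ Icc (0 : ℝ) 1, 0 < ψ t := fun t ht =>
    hϑpos.trans (h0.trans_le (hmono h0mem ht ht.1))
  have hφ : ∀ t ∈ Icc (0 : ℝ) 1,
      HasDerivAt (fun s => (ψ s)⁻¹ + s / ϑ) (-ψ' t / ψ t ^ 2 + 1 / ϑ) t := fun t ht =>
    ((hψ t ht).inv (hψpos t ht).ne').add ((hasDerivAt_id t).div_const ϑ)
  have hanti : AntitoneOn (fun s => (ψ s)⁻¹ + s / ϑ) (Icc 0 1) := by
    refine antitoneOn_of_hasDerivWithinAt_nonpos (convex_Icc 0 1)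
      (fun t ht => (hφ t ht).continuousAt.continuousWithinAt)
      (fun t ht => (hφ t (interior_subset ht)).hasDerivWithinAt) fun t ht => ?_
    have ht := interior_subset ht
    have : 1 / ϑ ≤ ψ' t / ψ t ^ 2 := by
      rw [div_le_div_iff₀ hϑpos (pow_pos (hψpos t ht) 2)]
      linarith [hsq t ht]
    rw [neg_div]
    linarith
  have h10 := hanti h0mem h1mem zero_le_one
  have hinv0 : (ψ 0)⁻¹ < ϑ⁻¹ := inv_strictAnti₀ hϑpos h0
  have hinv1 : 0 < (ψ 1)⁻¹ := inv_pos.mpr (hψpos 1 h1mem)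
  simp only [zero_div, add_zero, one_div] at h10
  linarith

namespace IsGradHessOn

variable {d : ℕ} {D : Set (Fin d → ℝ)} {f : (Fin d → ℝ) → ℝ} {g : (Fin d → ℝ) → (Fin d → ℝ)}
  {H : (Fin d → ℝ) → Matrix (Fin d) (Fin d) ℝ}

theorem grad_dotProduct_eq_of_isMinOn (hgh : IsGradHessOn D f g H) (hDo : IsOpen D)
    {c : Fin d → ℝ} {η : ℝ} {z : Fin d → ℝ} (hz : z ∈ D)
    (hmin : IsMinOn (fun x => η * (c ⬝ᵥ x) + f x) D z) (v : Fin d → ℝ) :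
    g z ⬝ᵥ v = -(η * (c ⬝ᵥ v)) := by
  obtain ⟨⟨L, hL, hLv⟩, -⟩ := hgh z hz
  set ℓ := LinearMap.toContinuousLinearMap (dotProductBilin ℝ ℝ c)
  have hlin : HasFDerivAt (fun x => η * (c ⬝ᵥ x)) (η • ℓ) z := ℓ.hasFDerivAt.const_smul η
  have hzero := (hmin.isLocalMin (hDo.mem_nhds hz)).hasFDerivAt_eq_zero (hlin.add hL)
  have := DFunLike.congr_fun hzero v
  simp only [_root_.add_apply, _root_.smul_apply, _root_.zero_apply, hLv, ℓ,
    LinearMap.coe_toContinuousLinearMap', dotProductBilin_apply_apply, smul_eq_mul] at this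
  linarith

theorem hasDerivAt_grad_dotProduct_line (hgh : IsGradHessOn D f g H) {z u : Fin d → ℝ} {t : ℝ}
    (ht : z + t • u ∈ D) :
    HasDerivAt (fun s => u ⬝ᵥ g (z + s • u)) (u ⬝ᵥ H (z + t • u) *ᵥ u) t := by
  obtain ⟨-, L', hL', hL'v⟩ := hgh _ ht
  have hline : HasDerivAt (fun s : ℝ => z + s • u) u t := by
    simpa using ((hasDerivAt_id t).smul_const u).const_add z
  have := (LinearMap.toContinuousLinearMap (dotProductBilin ℝ ℝ u)).hasFDerivAt.comp_hasDerivAt t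
    (hL'.comp_hasDerivAt t hline)
  simp only [LinearMap.coe_toContinuousLinearMap', Function.comp_def,
    dotProductBilin_apply_apply, hL'v] at this
  exact this

theorem grad_dotProduct_sub_le (hgh : IsGradHessOn D f g H) (hDc : Convex ℝ D)
    (hpos : ∀ x ∈ D, (H x).PosDef) {ϑ : ℝ} (hϑ : ∀ x ∈ D, g x ⬝ᵥ ((H x)⁻¹ *ᵥ g x) ≤ ϑ)
    {z x : Fin d → ℝ} (hz : z ∈ D) (hx : x ∈ D) :
    g z ⬝ᵥ (x - z) ≤ ϑ := by
  set u := x - z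
  have hseg : ∀ t ∈ Icc (0 : ℝ) 1, z + t • u ∈ D := fun t ht => hDc.add_smul_sub_mem hz hx ht
  have hϑ0 : 0 ≤ ϑ := by
    simpa using ((hpos z hz).inv.posSemidef.dotProduct_mulVec_nonneg (g z)).trans (hϑ z hz)
  have hsq : ∀ t ∈ Icc (0 : ℝ) 1,
      (u ⬝ᵥ g (z + t • u)) ^ 2 ≤ ϑ * (u ⬝ᵥ H (z + t • u) *ᵥ u) := fun t ht => by
    have hHt := hpos _ (hseg t ht)
    rw [dotProduct_comm]
    exact (hHt.sq_dotProduct_le _ u).trans (mul_le_mul_of_nonneg_right (hϑ _ (hseg t ht))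
      (by simpa using hHt.posSemidef.dotProduct_mulVec_nonneg u))
  rw [dotProduct_comm]
  simpa using le_of_sq_le_mul_deriv hϑ0
    (fun t ht => hgh.hasDerivAt_grad_dotProduct_line (hseg t ht)) hsq

theorem grad_dotProduct_le_mul_localNorm (hgh : IsGradHessOn D f g H) (hDc : Convex ℝ D)
    (hpos : ∀ x ∈ D, (H x).PosDef) {ϑ : ℝ} (hϑ : ∀ x ∈ D, g x ⬝ᵥ ((H x)⁻¹ *ᵥ g x) ≤ ϑ)
    (hsc : SelfConcordantOn D H) {z : Fin d → ℝ} (hz : z ∈ D) (v : Fin d → ℝ) :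
    g z ⬝ᵥ v ≤ ϑ * localNorm (H z) v := by
  have hbound : ∀ s > localNorm (H z) v, g z ⬝ᵥ v ≤ ϑ * s := by
    intro s hs
    have hs0 : 0 < s := (localNorm_nonneg _ _).trans_lt hs
    have hw : z + s⁻¹ • v ∈ D := (hsc z hz).1 _ <| by
      rwa [add_sub_cancel_left, localNorm_smul, abs_of_pos (inv_pos.mpr hs0), inv_mul_lt_one₀ hs0]
    have := hgh.grad_dotProduct_sub_le hDc hpos hϑ hz hw
    rwa [add_sub_cancel_left, dotProduct_smul, smul_eq_mul, inv_mul_le_iff₀ hs0, mul_comm] at this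
  have hlim : Tendsto (fun s => ϑ * s) (𝓝[>] localNorm (H z) v) (𝓝 (ϑ * localNorm (H z) v)) :=
    ((continuous_const_mul ϑ).tendsto _).mono_left nhdsWithin_le_nhds
  exact ge_of_tendsto hlim (eventually_nhdsWithin_of_forall hbound)

end IsGradHessOn

theorem central_path_suboptimality_general {d : ℕ}
    {D : Set (Fin d → ℝ)} (hDo : IsOpen D) (hDc : Convex ℝ D)
    (f : (Fin d → ℝ) → ℝ) (g : (Fin d → ℝ) → (Fin d → ℝ))
    (H : (Fin d → ℝ) → Matrix (Fin d) (Fin d) ℝ)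
    (hgh : IsGradHessOn D f g H) (hpos : ∀ x ∈ D, (H x).PosDef)
    (hsc : SelfConcordantOn D H)
    (ϑ : ℝ) (hϑ : ∀ x ∈ D, g x ⬝ᵥ ((H x)⁻¹ *ᵥ g x) ≤ ϑ)
    (c : Fin d → ℝ) (η : ℝ) (hη : 0 < η)
    (z : Fin d → ℝ) (hz : z ∈ D)
    (hzmin : ∀ x ∈ D, η * (c ⬝ᵥ z) + f z ≤ η * (c ⬝ᵥ x) + f x)
    (y : Fin d → ℝ) :
    ∀ x ∈ D, c ⬝ᵥ y ≤ c ⬝ᵥ x + (ϑ / η) * (1 + localNorm (H z) (y - z)) := by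
  intro x hx
  have hopt := hgh.grad_dotProduct_eq_of_isMinOn hDo hz hzmin
  have hfar := hgh.grad_dotProduct_sub_le hDc hpos hϑ hz hx
  have hnear := hgh.grad_dotProduct_le_mul_localNorm hDc hpos hϑ hsc hz (z - y)
  rw [← neg_sub y z, localNorm_neg] at hnear
  rw [hopt, dotProduct_sub] at hfar
  rw [hopt, dotProduct_neg, dotProduct_sub] at hnear
  rw [div_mul_eq_mul_div, ← sub_le_iff_le_add', le_div_iff₀ hη]
  linarith

/-- Suboptimality along the central path: if f is a self-concordant barrier for D with
complexity bound ϑ, z minimizes f_η(x) = η cᵀx + f(x), and y ∈ D satisfies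
‖y − z‖_z ≤ 1, then cᵀy ≤ cᵀx + (ϑ/η)(1 + ‖y − z‖_z) for every x ∈ D
(hence cᵀy ≤ val + 2ϑ/η). -/
theorem central_path_suboptimality {d : ℕ}
    {D : Set (Fin d → ℝ)} (hDo : IsOpen D) (hDc : Convex ℝ D)
    (hDb : Bornology.IsBounded D)
    (f : (Fin d → ℝ) → ℝ) (g : (Fin d → ℝ) → (Fin d → ℝ))
    (H : (Fin d → ℝ) → Matrix (Fin d) (Fin d) ℝ)
    (hgh : IsGradHessOn D f g H) (hpos : ∀ x ∈ D, (H x).PosDef)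
    (hsc : SelfConcordantOn D H)
    (ϑ : ℝ) (hϑ : ∀ x ∈ D, g x ⬝ᵥ ((H x)⁻¹ *ᵥ g x) ≤ ϑ)
    (c : Fin d → ℝ) (η : ℝ) (hη : 0 < η)
    (z : Fin d → ℝ) (hz : z ∈ D)
    (hzmin : ∀ x ∈ D, η * (c ⬝ᵥ z) + f z ≤ η * (c ⬝ᵥ x) + f x)
    (y : Fin d → ℝ) (hy : y ∈ D) (hyz : localNorm (H z) (y - z) ≤ 1) :
    ∀ x ∈ D, c ⬝ᵥ y ≤ c ⬝ᵥ x + (ϑ / η) * (1 + localNorm (H z) (y - z)) :=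
  central_path_suboptimality_general hDo hDc f g H hgh hpos hsc ϑ hϑ c η hη z hz hzmin y
end
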